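/- Conversely, if there exist modular supervisors S_j, j = 1,...,n, such that L(∧S_j/P) = K and L(S_j/Pʲ) ⊆ θ_j(K) for all j, then for each j, L(S_j/Pʲ) = θ_j(K); in particular, θ_j(K) is achievable by a supervisor over plant L(Pʲ). -/
import Mathlib


variable {E : Type*}

/-- A language `K` is F-controllable w.r.t. plant `L`, controllable events `Sc`
and forcible events `Sf`. -/
def FContr (L K : Set (List E)) (Sc Sf : Set E) : Prop :=
  ∀ s ∈ K, ∀ σ : E, s ++ [σ] ∈ L → s ++ [σ] ∉ K →
    σ ∈ Sc ∨ ∃ σf ∈ Sf, s ++ [σf] ∈ K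

/-- A language is prefix-closed. -/
def PrefixClosed (M : Set (List E)) : Prop :=
  ∀ s ∈ M, ∀ t : List E, t <+: s → t ∈ M

/-- Closed-loop language of supervisor `S` over plant `M`. -/
inductive CL (S : List E → Set E) (M : Set (List E)) : List E → Prop
  | nil : CL S M []
  | snoc {s : List E} {σ : E} : CL S M s → s ++ [σ] ∈ M → σ ∈ S s → CL S M (s ++ [σ])

-- Natural projection onto subalphabet `A`: erase letters outside `A`.
open Classical in
noncomputable def proj (A : Set E) : List E → List E
  | [] => []
  | a :: s => if a ∈ A then a :: proj A s else proj A s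


open Classical in
lemma proj_append (A : Set E) (s t : List E) :
    proj A (s ++ t) = proj A s ++ proj A t := by
  induction s with
  | nil => simp [proj]
  | cons a s ih => by_cases h : a ∈ A <;> simp [proj, h, ih]

theorem modular_supervisors_converse
    (n : ℕ) (A : Fin n → Set E) (P : Fin n → Set (List E))
    (S : Fin n → List E → Set E) (K : Set (List E))
    (hcov : (⋃ j, A j) = (Set.univ : Set E))
    (hPc : ∀ j, PrefixClosed (P j)) (hPε : ∀ j, [] ∈ P j)
    (hPA : ∀ j, ∀ s ∈ P j, ∀ a ∈ s, a ∈ A j)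
    (hS : ∀ j s, S j s ⊆ A j)
    (hKL : K ⊆ ⋂ j, proj (A j) ⁻¹' P j)
    (hglobal : {s | CL (fun s => ⋂ j, (S j (proj (A j) s) ∪ (A j)ᶜ))
                  (⋂ j, proj (A j) ⁻¹' P j) s} = K)
    (hsub : ∀ j, {t | CL (S j) (P j) t} ⊆ proj (A j) '' K) :
    ∀ j, {t | CL (S j) (P j) t} = proj (A j) '' K := by
  intro j
  apply le_antisymm (hsub j)
  rintro t ⟨s, hsK, rfl⟩
  rw [← hglobal] at hsK
  simp only [Set.mem_setOf_eq] at hsK ⊢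
  clear hsub hKL hglobal
  induction hsK with
  | nil => exact CL.nil
  | @snoc s σ hs hmem hctrl ih =>
      simp only [Set.mem_iInter] at hmem hctrl
      by_cases hA : σ ∈ A j
      · have h1 : proj (A j) (s ++ [σ]) = proj (A j) s ++ [σ] := by
          rw [proj_append]; simp [proj, hA]
        rw [h1]
        have h2 : σ ∈ S j (proj (A j) s) := by
          rcases hctrl j with h | h
          · exact h
          · exact absurd hA h
        have h3 : proj (A j) (s ++ [σ]) ∈ P j := hmem j
        rw [h1] at h3
        exact CL.snoc ih h3 h2
      · have h1 : proj (A j) (s ++ [σ]) = proj (A j) s := by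
          rw [proj_append]; simp [proj, hA]
        rw [h1]; exact ih
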